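/- There exists a positive bounded linear operator T on ℓ∞ with ‖T‖ ≤ 1 such that T is mean ergodic, but for every integer j ≥ 1 the power T^{2j} is not mean ergodic; in particular, T is not weakly almost periodic. -/

import Mathlib

/-!
Let `T` act on each pair of coordinates `{2i, 2i+1}` by the doubly stochastic matrix with
diagonal entries `w i = 1 / (i + 2)`. It fixes pair averages and multiplies pair differences
by the `skewEigenvalue` `β i = 2 w i - 1 ∈ (-1, 0]`. Partial sums of a geometric series with
ratio in `[-1, 0]` lie in `[0, 1]`, so the Cesàro means of `T` converge uniformly, at rate
`1 / n`, to the pair average. For `T ^ (2j)` the ratios `β i ^ (2j)` lie in `[0, 1)` but tend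
to `1`: on the alternating sequence `(-1) ^ n` the Cesàro means tend to `0` in each coordinate
yet stay close to `1` far out. The `T`-orbit of the alternating sequence tends to `0`
coordinatewise, while a limit of the even coordinates along an ultrafilter takes the value
`(-1) ^ n` at its `n`-th term, so the orbit has no weak cluster point.
-/

open Filter Topology BoundedContinuousFunction

noncomputable section

section UltrafilterLimit

variable {α : Type*} [TopologicalSpace α]

theorem BoundedContinuousFunction.norm_le_of_tendsto_comp {β ι : Type*} [SeminormedAddCommGroup β]
    {l : Filter ι} [l.NeBot] (f : α →ᵇ β) {e : ι → α} {c : β}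
    (h : Tendsto (fun i => f (e i)) l (𝓝 c)) : ‖c‖ ≤ ‖f‖ :=
  le_of_tendsto h.norm (Eventually.of_forall fun i => f.norm_coe_le_norm (e i))

theorem BoundedContinuousFunction.exists_tendsto_ultrafilter (U : Ultrafilter α) (f : α →ᵇ ℝ) :
    ∃ c, Tendsto f U (𝓝 c) := by
  obtain ⟨c, -, hc⟩ := (isCompact_closedBall (0 : ℝ) ‖f‖).ultrafilter_le_nhds (U.map f) <| by
    rw [Ultrafilter.coe_map, le_principal_iff, Filter.mem_map]
    exact univ_mem' fun x => mem_closedBall_zero_iff.2 (f.norm_coe_le_norm x)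
  exact ⟨c, hc⟩

theorem BoundedContinuousFunction.tendsto_limUnder_ultrafilter (U : Ultrafilter α)
    (f : α →ᵇ ℝ) : Tendsto f U (𝓝 (limUnder (U : Filter α) f)) :=
  tendsto_nhds_limUnder (f.exists_tendsto_ultrafilter U)

def ultrafilterLimitCLM (U : Ultrafilter α) : (α →ᵇ ℝ) →L[ℝ] ℝ :=
  LinearMap.mkContinuous
    { toFun := fun f => limUnder (U : Filter α) f
      map_add' := fun f g =>
        ((f.tendsto_limUnder_ultrafilter U).add (g.tendsto_limUnder_ultrafilter U)).limUnder_eq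
      map_smul' := fun c f => ((f.tendsto_limUnder_ultrafilter U).const_smul c).limUnder_eq }
    1 fun f => by
      rw [one_mul]
      exact f.norm_le_of_tendsto_comp (f.tendsto_limUnder_ultrafilter U)

theorem ultrafilterLimitCLM_eq_of_tendsto {U : Ultrafilter α} {l : Filter α} (hU : ↑U ≤ l)
    {f : α →ᵇ ℝ} {c : ℝ} (h : Tendsto f l (𝓝 c)) : ultrafilterLimitCLM U f = c :=
  (h.mono_left hU).limUnder_eq

end UltrafilterLimit

theorem BoundedContinuousFunction.not_exists_tendsto_of_tendsto_apply_zero_of_tendsto_apply_one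
    {α ι κ : Type*} [TopologicalSpace α] {L : Filter κ} [L.NeBot] {l : Filter ι} [l.NeBot]
    {A : κ → α →ᵇ ℝ} {e : ι → α}
    (hnear : ∀ i, Tendsto (fun N => A N (e i)) L (𝓝 0))
    (hfar : ∀ᶠ N in L, Tendsto (fun i => A N (e i)) l (𝓝 1)) :
    ¬ ∃ y, Tendsto A L (𝓝 y) := by
  rintro ⟨y, hy⟩
  have hy0 : ∀ i, y (e i) = 0 := fun i =>
    tendsto_nhds_unique (((continuous_eval_const (e i)).tendsto y).comp hy) (hnear i)
  have hsep : ∀ᶠ N in L, 1 ≤ ‖A N - y‖ := hfar.mono fun N hN => by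
    simpa using (A N - y).norm_le_of_tendsto_comp (e := e) (c := (1 : ℝ)) (by simpa [hy0] using hN)
  have hsmall : ∀ᶠ N in L, ‖A N - y‖ < 1 :=
    (tendsto_iff_norm_sub_tendsto_zero.1 hy).eventually (gt_mem_nhds one_pos)
  obtain ⟨N, h1, h2⟩ := (hsep.and hsmall).exists
  exact h2.not_ge h1

theorem exists_forall_tendsto_of_isCompact_closure_weakSpace {𝕜 E ι : Type*}
    [NontriviallyNormedField 𝕜] [NormedAddCommGroup E] [NormedSpace 𝕜 E] {u : ι → E}
    (hu : IsCompact (closure (Set.range fun n => toWeakSpace 𝕜 E (u n)))) (V : Ultrafilter ι) :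
    ∃ y : E, ∀ ψ : E →L[𝕜] 𝕜, Tendsto (fun n => ψ (u n)) V (𝓝 (ψ y)) := by
  obtain ⟨y, -, hy⟩ := hu.ultrafilter_le_nhds (V.map fun n => toWeakSpace 𝕜 E (u n)) <| by
    rw [Ultrafilter.coe_map, le_principal_iff, Filter.mem_map]
    exact univ_mem' fun n => subset_closure ⟨n, rfl⟩
  exact ⟨y, fun ψ => ((WeakBilin.eval_continuous _ ψ).tendsto y).comp hy⟩

theorem geom_sum_mem_Icc_of_mem_Icc {x : ℝ} (hx : x ∈ Set.Icc (-1) 0) (n : ℕ) :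
    ∑ k ∈ Finset.range n, x ^ k ∈ Set.Icc (0 : ℝ) 1 := by
  induction n with
  | zero => simp
  | succ n ih =>
    rw [geom_sum_succ]
    constructor <;> nlinarith [hx.1, hx.2, ih.1, ih.2]

theorem norm_convex_combination_le {E : Type*} [SeminormedAddCommGroup E] [NormedSpace ℝ E]
    {t C : ℝ} {x y : E} (ht0 : 0 ≤ t) (ht1 : t ≤ 1) (hx : ‖x‖ ≤ C) (hy : ‖y‖ ≤ C) :
    ‖t • x + (1 - t) • y‖ ≤ C :=
  mem_closedBall_zero_iff.1 <| convex_closedBall (0 : E) C (mem_closedBall_zero_iff.2 hx)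
    (mem_closedBall_zero_iff.2 hy) ht0 (sub_nonneg.2 ht1) (add_sub_cancel t 1)

theorem BoundedContinuousFunction.norm_convex_combination_apply_le {α : Type*}
    [TopologicalSpace α] (f : α →ᵇ ℝ) (t : unitInterval) (x y : α) :
    ‖t * f x + (1 - t) * f y‖ ≤ ‖f‖ :=
  norm_convex_combination_le t.2.1 t.2.2 (f.norm_coe_le_norm x) (f.norm_coe_le_norm y)

def alternating : ℕ →ᵇ ℝ := ofNormedAddCommGroupDiscrete (fun n => (-1) ^ n) 1 (by simp)

namespace PairMixing

def partner (n : ℕ) : ℕ := if n % 2 = 0 then n + 1 else n - 1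

@[simp] theorem partner_partner (n : ℕ) : partner (partner n) = n := by
  unfold partner; split_ifs <;> omega

@[simp] theorem partner_div_two (n : ℕ) : partner n / 2 = n / 2 := by
  unfold partner; split_ifs <;> omega

theorem neg_one_pow_partner (n : ℕ) : (-1 : ℝ) ^ partner n = -(-1) ^ n := by
  unfold partner
  split_ifs with h
  · rw [pow_succ, mul_neg_one]
  · obtain ⟨k, rfl⟩ : ∃ k, n = k + 1 := ⟨n - 1, by omega⟩
    rw [Nat.add_sub_cancel, pow_succ, mul_neg_one, neg_neg]

def pairAverage (z : ℕ →ᵇ ℝ) : ℕ →ᵇ ℝ :=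
  ofNormedAddCommGroupDiscrete (fun n => (z n + z (partner n)) / 2) ‖z‖ fun n => by
    convert norm_convex_combination_le (t := 1 / 2) (by norm_num) (by norm_num)
      (z.norm_coe_le_norm n) (z.norm_coe_le_norm (partner n)) using 2
    simp only [smul_eq_mul]; ring

theorem pairAverage_apply (z : ℕ →ᵇ ℝ) (n : ℕ) : pairAverage z n = (z n + z (partner n)) / 2 :=
  rfl

def pairDiff (z : ℕ →ᵇ ℝ) (n : ℕ) : ℝ := (z n - z (partner n)) / 2

theorem abs_pairDiff_le (z : ℕ →ᵇ ℝ) (n : ℕ) : |pairDiff z n| ≤ ‖z‖ := by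
  have h := norm_convex_combination_le (t := 1 / 2) (by norm_num) (by norm_num)
    (z.norm_coe_le_norm n) ((norm_neg (z (partner n))).trans_le (z.norm_coe_le_norm _))
  rw [Real.norm_eq_abs, smul_eq_mul, smul_eq_mul] at h
  convert h using 2
  unfold pairDiff; ring

variable (w : ℕ → unitInterval)

/-- Acts on each pair `{2i, 2i+1}` by the matrix `!![w i, 1 - w i; 1 - w i, w i]`. -/
def mixing : (ℕ →ᵇ ℝ) →L[ℝ] (ℕ →ᵇ ℝ) :=
  LinearMap.mkContinuous
    { toFun := fun z => ofNormedAddCommGroupDiscrete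
        (fun n => w (n / 2) * z n + (1 - w (n / 2)) * z (partner n)) ‖z‖ fun n =>
          z.norm_convex_combination_apply_le _ n _
      map_add' := fun z z' => by ext n; simp; ring
      map_smul' := fun c z => by ext n; simp; ring }
    1 fun z => by
      rw [one_mul]
      exact (norm_le (norm_nonneg z)).2 fun n => z.norm_convex_combination_apply_le _ n _

theorem mixing_apply (z : ℕ →ᵇ ℝ) (n : ℕ) :
    mixing w z n = w (n / 2) * z n + (1 - w (n / 2)) * z (partner n) :=
  rfl

theorem norm_mixing_le : ‖mixing w‖ ≤ 1 :=
  LinearMap.mkContinuous_norm_le _ zero_le_one _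

theorem mixing_nonneg {z : ℕ →ᵇ ℝ} (hz : 0 ≤ z) : 0 ≤ mixing w z := fun n => by
  show 0 ≤ mixing w z n
  rw [mixing_apply]
  exact add_nonneg (mul_nonneg (w _).2.1 (hz n))
    (mul_nonneg (unitInterval.one_minus_nonneg _) (hz _))

def skewEigenvalue (i : ℕ) : ℝ := 2 * w i - 1

variable {w} in
theorem skewEigenvalue_mem_Icc {i : ℕ} (hw : (w i : ℝ) ≤ 1 / 2) :
    skewEigenvalue w i ∈ Set.Icc (-1) 0 := by
  unfold skewEigenvalue
  constructor <;> linarith [(w i).2.1]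

theorem pairAverage_mixing (z : ℕ →ᵇ ℝ) : pairAverage (mixing w z) = pairAverage z := by
  ext n; simp only [pairAverage_apply, mixing_apply, partner_partner, partner_div_two]; ring

theorem pairDiff_mixing (z : ℕ →ᵇ ℝ) (n : ℕ) :
    pairDiff (mixing w z) n = skewEigenvalue w (n / 2) * pairDiff z n := by
  simp only [pairDiff, skewEigenvalue, mixing_apply, partner_partner, partner_div_two]; ring

theorem mixing_pow_apply (k : ℕ) (z : ℕ →ᵇ ℝ) (n : ℕ) :
    (mixing w ^ k) z n = pairAverage z n + skewEigenvalue w (n / 2) ^ k * pairDiff z n := by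
  induction k generalizing z with
  | zero => simp [pairAverage_apply, pairDiff]; ring
  | succ k ih =>
    rw [pow_succ, mul_apply_eq_comp, ih, pairAverage_mixing, pairDiff_mixing]
    ring

theorem sum_mixing_pow_apply (n : ℕ) (z : ℕ →ᵇ ℝ) (m : ℕ) :
    (∑ k ∈ Finset.range n, (mixing w ^ k) z) m =
      n * pairAverage z m +
        (∑ k ∈ Finset.range n, skewEigenvalue w (m / 2) ^ k) * pairDiff z m := by
  rw [coe_sum, Finset.sum_apply]
  simp only [mixing_pow_apply, Finset.sum_add_distrib, Finset.sum_const, Finset.card_range,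
    nsmul_eq_mul, Finset.sum_mul]

theorem norm_cesaro_mixing_sub_pairAverage_le (hw : ∀ i, (w i : ℝ) ≤ 1 / 2) (z : ℕ →ᵇ ℝ)
    {n : ℕ} (hn : n ≠ 0) :
    ‖(n : ℝ)⁻¹ • ∑ k ∈ Finset.range n, (mixing w ^ k) z - pairAverage z‖ ≤ ‖z‖ / n := by
  refine (norm_le (by positivity)).2 fun m => ?_
  have hgeom := geom_sum_mem_Icc_of_mem_Icc (skewEigenvalue_mem_Icc (hw (m / 2))) n
  have hn' : (n : ℝ) ≠ 0 := Nat.cast_ne_zero.2 hn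
  calc ‖((n : ℝ)⁻¹ • ∑ k ∈ Finset.range n, (mixing w ^ k) z - pairAverage z) m‖
      = (n : ℝ)⁻¹ * |∑ k ∈ Finset.range n, skewEigenvalue w (m / 2) ^ k| * |pairDiff z m| := by
        rw [coe_sub, coe_smul, Pi.sub_apply, sum_mixing_pow_apply, smul_eq_mul,
          mul_add, inv_mul_cancel_left₀ hn', add_sub_cancel_left, Real.norm_eq_abs, abs_mul,
          abs_mul, abs_inv, Nat.abs_cast, mul_assoc]
    _ ≤ (n : ℝ)⁻¹ * 1 * ‖z‖ := by
        gcongr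
        · exact abs_le.2 ⟨by linarith [hgeom.1], hgeom.2⟩
        · exact abs_pairDiff_le z m
    _ = ‖z‖ / n := by ring

theorem tendsto_cesaro_mixing (hw : ∀ i, (w i : ℝ) ≤ 1 / 2) (z : ℕ →ᵇ ℝ) :
    Tendsto (fun n : ℕ => (n : ℝ)⁻¹ • ∑ k ∈ Finset.range n, (mixing w ^ k) z) atTop
      (𝓝 (pairAverage z)) := by
  rw [tendsto_iff_norm_sub_tendsto_zero]
  refine squeeze_zero' (Eventually.of_forall fun n => norm_nonneg _) ?_
    (tendsto_const_div_atTop_nhds_zero_nat ‖z‖)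
  filter_upwards [eventually_ne_atTop 0] with n hn
  exact norm_cesaro_mixing_sub_pairAverage_le w hw z hn

theorem mixing_pow_alternating_apply (k n : ℕ) :
    (mixing w ^ k) alternating n = skewEigenvalue w (n / 2) ^ k * (-1) ^ n := by
  have hz : ∀ m, alternating m = (-1) ^ m := fun _ => rfl
  rw [mixing_pow_apply, pairAverage_apply, pairDiff, hz, hz, neg_one_pow_partner]
  ring

theorem mixing_pow_alternating_apply_two_mul (k i : ℕ) :
    (mixing w ^ k) alternating (2 * i) = skewEigenvalue w i ^ k := by
  rw [mixing_pow_alternating_apply, Nat.mul_div_cancel_left i two_pos, pow_mul, neg_one_sq,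
    one_pow, mul_one]

variable {w}

theorem abs_skewEigenvalue_lt_one {i : ℕ} (hw : (w i : ℝ) ∈ Set.Ioo 0 1) :
    |skewEigenvalue w i| < 1 := by
  unfold skewEigenvalue
  rw [abs_lt]
  constructor <;> linarith [hw.1, hw.2]

theorem tendsto_skewEigenvalue (hw₀ : Tendsto (fun i => (w i : ℝ)) atTop (𝓝 0)) :
    Tendsto (skewEigenvalue w) atTop (𝓝 (-1)) := by
  show Tendsto (fun i => 2 * (w i : ℝ) - 1) atTop (𝓝 (-1))
  simpa using (hw₀.const_mul 2).sub_const 1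

theorem not_exists_tendsto_cesaro_mixing_pow_even (hw : ∀ i, (w i : ℝ) ∈ Set.Ioo 0 1)
    (hw₀ : Tendsto (fun i => (w i : ℝ)) atTop (𝓝 0)) {j : ℕ} (hj : j ≠ 0) :
    ¬ ∃ y : ℕ →ᵇ ℝ, Tendsto (fun n : ℕ => (n : ℝ)⁻¹ •
      ∑ k ∈ Finset.range n, ((mixing w ^ (2 * j)) ^ k) alternating) atTop (𝓝 y) := by
  have hA : ∀ n i : ℕ,
      ((n : ℝ)⁻¹ • ∑ k ∈ Finset.range n, ((mixing w ^ (2 * j)) ^ k) alternating) (2 * i) =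
        (n : ℝ)⁻¹ * ∑ k ∈ Finset.range n, (skewEigenvalue w i ^ (2 * j)) ^ k := by
    intro n i
    rw [BoundedContinuousFunction.smul_apply, smul_eq_mul, coe_sum, Finset.sum_apply]
    congr 1
    refine Finset.sum_congr rfl fun k _ => ?_
    rw [← pow_mul, mixing_pow_alternating_apply_two_mul, pow_mul]
  refine not_exists_tendsto_of_tendsto_apply_zero_of_tendsto_apply_one (e := (2 * ·))
    (l := atTop) (fun i => ?_) ?_
  · simp only [hA]
    refine (tendsto_pow_atTop_nhds_zero_of_abs_lt_one ?_).cesaro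
    rw [abs_pow]
    exact pow_lt_one₀ (abs_nonneg _) (abs_skewEigenvalue_lt_one (hw i)) (by positivity)
  · filter_upwards [eventually_ne_atTop 0] with n hn
    have h1 : Tendsto (fun i => skewEigenvalue w i ^ (2 * j)) atTop (𝓝 1) := by
      simpa [pow_mul] using (tendsto_skewEigenvalue hw₀).pow (2 * j)
    simp only [hA]
    convert (tendsto_finsetSum (Finset.range n) fun k _ => h1.pow k).const_mul (n : ℝ)⁻¹
    simp [hn]

theorem not_isCompact_closure_weak_orbit_alternating (hw : ∀ i, (w i : ℝ) ∈ Set.Ioo 0 1)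
    (hw₀ : Tendsto (fun i => (w i : ℝ)) atTop (𝓝 0)) :
    ¬ IsCompact (closure
      (Set.range fun n : ℕ => toWeakSpace ℝ (ℕ →ᵇ ℝ) ((mixing w ^ n) alternating))) := by
  intro hK
  obtain ⟨y, hy⟩ := exists_forall_tendsto_of_isCompact_closure_weakSpace hK (Ultrafilter.of atTop)
  have hy0 : y = 0 := by
    ext m
    refine tendsto_nhds_unique (hy (evalCLM ℝ m)) ?_
    simp only [evalCLM_apply, mixing_pow_alternating_apply]
    simpa using ((tendsto_pow_atTop_nhds_zero_of_abs_lt_one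
      (abs_skewEigenvalue_lt_one (hw (m / 2)))).mul_const _).mono_left (Ultrafilter.of_le _)
  set φ := ultrafilterLimitCLM (Ultrafilter.of (map (2 * ·) (atTop : Filter ℕ)))
  have hφ : ∀ n, φ ((mixing w ^ n) alternating) = (-1) ^ n := fun n =>
    ultrafilterLimitCLM_eq_of_tendsto (Ultrafilter.of_le _) <| tendsto_map'_iff.2 <|
      ((tendsto_skewEigenvalue hw₀).pow n).congr fun i =>
        (mixing_pow_alternating_apply_two_mul w n i).symm
  have h := (hy φ).abs
  simp only [hφ, hy0, map_zero, abs_pow, abs_neg, abs_one, one_pow, abs_zero] at h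
  exact one_ne_zero (tendsto_nhds_unique tendsto_const_nhds h)

def harmonicWeight (i : ℕ) : unitInterval :=
  ⟨((i : ℝ) + 2)⁻¹, by positivity, inv_le_one_of_one_le₀ (by linarith [i.cast_nonneg (α := ℝ)])⟩

theorem harmonicWeight_le_half (i : ℕ) : (harmonicWeight i : ℝ) ≤ 1 / 2 := by
  rw [one_div]
  exact inv_anti₀ two_pos (by linarith [i.cast_nonneg (α := ℝ)])

theorem harmonicWeight_mem_Ioo (i : ℕ) : (harmonicWeight i : ℝ) ∈ Set.Ioo 0 1 :=
  ⟨by unfold harmonicWeight; positivity, (harmonicWeight_le_half i).trans_lt (by norm_num)⟩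

theorem tendsto_harmonicWeight : Tendsto (fun i => (harmonicWeight i : ℝ)) atTop (𝓝 0) :=
  tendsto_inv_atTop_zero.comp (tendsto_atTop_add_const_right _ 2 tendsto_natCast_atTop_atTop)

end PairMixing

end

theorem exists_mean_ergodic_contraction_on_linfty_with_non_ergodic_even_powers :
    ∃ T : (ℕ →ᵇ ℝ) →L[ℝ] (ℕ →ᵇ ℝ),
      ‖T‖ ≤ 1 ∧
      (∀ x : ℕ →ᵇ ℝ, 0 ≤ x → 0 ≤ T x) ∧
      (∀ x : ℕ →ᵇ ℝ, ∃ y : ℕ →ᵇ ℝ,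
        Tendsto (fun n : ℕ => (n : ℝ)⁻¹ • ∑ k ∈ Finset.range n, (T ^ k) x) atTop (nhds y)) ∧
      (∀ j : ℕ, 1 ≤ j → ∃ x : ℕ →ᵇ ℝ, ¬ ∃ y : ℕ →ᵇ ℝ,
        Tendsto (fun n : ℕ => (n : ℝ)⁻¹ • ∑ k ∈ Finset.range n, ((T ^ (2 * j)) ^ k) x)
          atTop (nhds y)) ∧
      (∃ x : ℕ →ᵇ ℝ,
        ¬ IsCompact (closure
          (Set.range fun n : ℕ => toWeakSpace ℝ (ℕ →ᵇ ℝ) ((T ^ n) x)))) :=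
  open PairMixing in
  ⟨mixing harmonicWeight, norm_mixing_le _, fun _ => mixing_nonneg _,
    fun z => ⟨pairAverage z, tendsto_cesaro_mixing _ harmonicWeight_le_half z⟩,
    fun _ hj => ⟨alternating, not_exists_tendsto_cesaro_mixing_pow_even harmonicWeight_mem_Ioo
      tendsto_harmonicWeight (Nat.one_le_iff_ne_zero.1 hj)⟩,
    ⟨alternating, not_isCompact_closure_weak_orbit_alternating harmonicWeight_mem_Ioo
      tendsto_harmonicWeight⟩⟩
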